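/- Fix n ≥ 1 and X ⊆ ℕ², and assume (n+1, i) ∈ X and (i, n+1) ∉ X for every i ∈ [n]. Let I = {i₁ < ⋯ < i_ℓ} ⊆ [n], define I' = {i_k ∈ I : i_k − 1 ∉ I} and I'' = I' \ {1}, and for each k ∈ [ℓ] set I_k = {i₁,…,i_{k−1}, i_k − 1, i_{k+1} − 1, …, i_ℓ − 1} \ {0} and Î_k = {i₁,…,i_{k−1}, i_{k+1} − 1, …, i_ℓ − 1} \ {0}. Then d_X(I; n+1) = d_X(I; n) + Σ_{i_k ∈ I''} d_X(I_k; n) + Σ_{i_k ∈ I'} d_X(Î_k; n). -/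

import Mathlib

open Classical in
/-- The `X`-descent set of a word `w = w₁⋯w_n` (stored 0-indexed as a list), as a subset of
`[n-1] = {1, …, n-1}`: position `i` is an `X`-descent iff `(w_i, w_{i+1}) ∈ X`. -/
noncomputable def XDes (X : Set (ℕ × ℕ)) (w : List ℕ) : Finset ℕ :=
  (Finset.Icc 1 (w.length - 1)).filter (fun i => (w.getD (i - 1) 0, w.getD i 0) ∈ X)

/-- `dX X I S` is the number of permutations of the finite label set `S ⊆ ℕ` (written in
one-line notation as duplicate-free lists using exactly the labels of `S`) whose
`X`-descent set is exactly `I`. -/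
noncomputable def dX (X : Set (ℕ × ℕ)) (I : Finset ℕ) (S : Finset ℕ) : ℕ :=
  Nat.card {w : List ℕ // w.Nodup ∧ w.toFinset = S ∧ XDes X w = I}

/-- `dXn X I n = dX X I [n]` where `[n] = {1, …, n}`. -/
noncomputable def dXn (X : Set (ℕ × ℕ)) (I : Finset ℕ) (n : ℕ) : ℕ :=
  dX X I (Finset.Icc 1 n)

/-- For `I = {i₁ < ⋯ < i_ℓ}` and `m = i_k ∈ I`, the set
`I_k = {i₁,…,i_{k−1}, i_k − 1, i_{k+1} − 1, …, i_ℓ − 1} \ {0}`: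
elements below `m` are kept, elements `≥ m` are decreased by one, and `0` is removed. -/
def shiftFrom (I : Finset ℕ) (m : ℕ) : Finset ℕ :=
  ((I.filter (· < m)) ∪ ((I.filter (fun i => m ≤ i)).image (· - 1))).erase 0

/-- For `I = {i₁ < ⋯ < i_ℓ}` and `m = i_k ∈ I`, the set
`Î_k = {i₁,…,i_{k−1}, i_{k+1} − 1, …, i_ℓ − 1} \ {0}`:
elements below `m` are kept, `m` is dropped, elements `> m` are decreased by one,
and `0` is removed. -/
def shiftDrop (I : Finset ℕ) (m : ℕ) : Finset ℕ :=
  ((I.filter (· < m)) ∪ ((I.filter (fun i => m < i)).image (· - 1))).erase 0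

/-! Deleting the letter `a` from a permutation of `insert a S` leaves a permutation `w` of `S`
and a position `q`. When `(a, b) ∈ X` and `(b, a) ∉ X` for all `b ∈ S`, putting `a` back at a
position `q < #S` turns the descent set `D` of `w` into
`{i ∈ D | i < q} ∪ {q + 1} ∪ ({i ∈ D | q < i} + 1)`: the descent at `q + 1` is created and only
the information whether `q ∈ D` is lost, while putting it at the end changes nothing. So `I` is
produced from position `q < #S` exactly when `m = q + 1 ∈ I`, `q ∉ I`, and `D` is either
`Î_k = shiftDrop I m` (if `q ∉ D`) or `I_k = shiftFrom I m = insert q (shiftDrop I m)`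
(if `q ∈ D`, which is impossible for `q = 0`).
-/

namespace List

variable {α : Type*} [DecidableEq α]

theorem idxOf_insertIdx_of_notMem {a : α} {w : List α} (hw : w.Nodup) (ha : a ∉ w) {q : ℕ}
    (hq : q ≤ w.length) : (w.insertIdx q a).idxOf a = q := by
  have hnd : (w.insertIdx q a).Nodup :=
    (perm_insertIdx a w hq).nodup_iff.2 (nodup_cons.2 ⟨ha, hw⟩)
  have hlen : q < (w.insertIdx q a).length := by rw [length_insertIdx_of_le_length hq]; omega
  simpa only [getElem_insertIdx_self] using hnd.idxOf_getElem q hlen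

theorem insertIdx_eraseIdx_idxOf {a : α} {v : List α} (ha : a ∈ v) :
    (v.eraseIdx (v.idxOf a)).insertIdx (v.idxOf a) a = v := by
  simpa only [getElem_idxOf] using insertIdx_eraseIdx_getElem (idxOf_lt_length_of_mem ha)

end List

namespace Finset

variable {α : Type*} [DecidableEq α]

def lists (S : Finset α) : Finset (List α) := ⟨S.val.lists, Multiset.lists_nodup_finset S⟩

theorem mem_lists {S : Finset α} {w : List α} : w ∈ S.lists ↔ w.Nodup ∧ w.toFinset = S := by
  rw [lists, mem_mk, Multiset.mem_lists_iff, Multiset.quot_mk_to_coe]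
  constructor
  · intro h
    refine ⟨?_, ?_⟩
    · rw [← Multiset.coe_nodup, ← h]; exact S.nodup
    · rw [← List.toFinset_coe, ← h, val_toFinset]
  · rintro ⟨hw, rfl⟩
    rw [List.toFinset_val, hw.dedup]

theorem mem_iff_of_mem_lists {S : Finset α} {w : List α} (hw : w ∈ S.lists) {b : α} :
    b ∈ w ↔ b ∈ S := by
  rw [← List.mem_toFinset, (mem_lists.1 hw).2]

theorem insertIdx_mem_lists_insert_iff {a : α} {S : Finset α} (ha : a ∉ S) {w : List α} {q : ℕ}
    (hq : q ≤ w.length) : w.insertIdx q a ∈ (insert a S).lists ↔ w ∈ S.lists := by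
  have hperm := List.perm_insertIdx a w hq
  rw [mem_lists, mem_lists, hperm.nodup_iff, List.toFinset_eq_of_perm _ _ hperm,
    List.nodup_cons, List.toFinset_cons]
  constructor
  · rintro ⟨⟨haw, hw⟩, hS⟩
    refine ⟨hw, ?_⟩
    rw [← erase_insert (s := w.toFinset) (List.mem_toFinset.not.2 haw), hS, erase_insert ha]
  · rintro ⟨hw, rfl⟩
    exact ⟨⟨List.mem_toFinset.not.1 ha, hw⟩, rfl⟩

theorem length_of_mem_lists {S : Finset α} {w : List α} (h : w ∈ S.lists) : w.length = #S := by
  obtain ⟨hw, rfl⟩ := mem_lists.1 h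
  exact (List.toFinset_card_of_nodup hw).symm

theorem card_filter_lists_insert {a : α} {S : Finset α} (ha : a ∉ S) (p : List α → Prop)
    [DecidablePred p] :
    #{v ∈ (insert a S).lists | p v} =
      ∑ q ∈ range (#S + 1), #{w ∈ S.lists | p (w.insertIdx q a)} := by
  rw [← card_sigma]
  refine card_bij' (fun v _ => ⟨v.idxOf a, v.eraseIdx (v.idxOf a)⟩)
    (fun x _ => x.2.insertIdx x.1 a) ?_ ?_ ?_ ?_
  · intro v hv
    obtain ⟨hvS, hpv⟩ := mem_filter.1 hv
    have hav : a ∈ v := (mem_iff_of_mem_lists hvS).2 (mem_insert_self a S)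
    have hidx := List.idxOf_lt_length_of_mem hav
    have hlen := length_of_mem_lists hvS
    rw [card_insert_of_notMem ha] at hlen
    have hq : v.idxOf a ≤ (v.eraseIdx (v.idxOf a)).length := by
      rw [List.length_eraseIdx_of_lt hidx]; omega
    rw [← List.insertIdx_eraseIdx_idxOf hav, insertIdx_mem_lists_insert_iff ha hq] at hvS
    rw [← List.insertIdx_eraseIdx_idxOf hav] at hpv
    simp only [mem_sigma, mem_range, mem_filter]
    exact ⟨by omega, hvS, hpv⟩
  · rintro ⟨q, w⟩ hw
    simp only [mem_sigma, mem_range, mem_filter] at hw ⊢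
    obtain ⟨hq, hwS, hpw⟩ := hw
    have hq' : q ≤ w.length := by rw [length_of_mem_lists hwS]; omega
    exact ⟨(insertIdx_mem_lists_insert_iff ha hq').2 hwS, hpw⟩
  · intro v hv
    exact List.insertIdx_eraseIdx_idxOf
      ((mem_iff_of_mem_lists (mem_filter.1 hv).1).2 (mem_insert_self a S))
  · rintro ⟨q, w⟩ hw
    simp only [mem_sigma, mem_range, mem_filter] at hw
    obtain ⟨hq, hwS, -⟩ := hw
    obtain ⟨hwn, rfl⟩ := mem_lists.1 hwS
    have hq' : q ≤ w.length := by rw [length_of_mem_lists hwS]; omega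
    have haw : a ∉ w := fun h => ha ((mem_iff_of_mem_lists hwS).1 h)
    simp only [List.idxOf_insertIdx_of_notMem hwn haw hq', List.eraseIdx_insertIdx_self]

theorem erase_eq_iff_eq_or_eq_insert {s t : Finset α} {a : α}
    (ha : a ∉ t) : s.erase a = t ↔ s = t ∨ s = insert a t := by
  constructor
  · rintro rfl
    by_cases h : a ∈ s
    · exact Or.inr (insert_erase h).symm
    · exact Or.inl (erase_eq_of_notMem h).symm
  · rintro (rfl | rfl)
    · exact erase_eq_of_notMem ha
    · exact erase_insert ha

theorem card_filter_erase_eq {ι : Type*} (s : Finset ι)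
    (f : ι → Finset α) {a : α} {t : Finset α} (ha : a ∉ t) :
    #{x ∈ s | (f x).erase a = t} = #{x ∈ s | f x = t} + #{x ∈ s | f x = insert a t} := by
  classical
  rw [← card_union_of_disjoint, ← filter_or]
  · simp only [erase_eq_iff_eq_or_eq_insert ha]
  · refine disjoint_filter.2 fun x _ h h' => ?_
    rw [h] at h'
    exact ha (h' ▸ mem_insert_self a t)

theorem sum_range_ite_succ_mem {M : Type*} [AddCommMonoid M] {N : ℕ} {T : Finset ℕ}
    (hT : T ⊆ Icc 1 N) (f : ℕ → M) :
    ∑ q ∈ range N, (if q + 1 ∈ T then f (q + 1) else 0) = ∑ m ∈ T, f m := by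
  rw [range_eq_Ico, sum_Ico_add' (fun m => if m ∈ T then f m else 0), zero_add,
    Ico_add_one_right_eq_Icc, sum_ite_mem, inter_eq_right.2 hT]

end Finset

open Finset

theorem mem_XDes {X : Set (ℕ × ℕ)} {w : List ℕ} {i : ℕ} :
    i ∈ XDes X w ↔ (1 ≤ i ∧ i + 1 ≤ w.length) ∧ (w.getD (i - 1) 0, w.getD i 0) ∈ X := by
  simp only [XDes, Finset.mem_filter, Finset.mem_Icc]
  exact and_congr_left fun _ => by omega

theorem lt_length_of_mem_XDes {X : Set (ℕ × ℕ)} {w : List ℕ} {i : ℕ} (h : i ∈ XDes X w) :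
    i < w.length :=
  (mem_XDes.1 h).1.2

theorem zero_notMem_XDes (X : Set (ℕ × ℕ)) (w : List ℕ) : 0 ∉ XDes X w := by
  simp [mem_XDes]

theorem mem_XDes_insertIdx {X : Set (ℕ × ℕ)} {a : ℕ} {w : List ℕ}
    (hX : ∀ b ∈ w, (a, b) ∈ X ∧ (b, a) ∉ X) {q : ℕ} (hq : q ≤ w.length) {i : ℕ} :
    i ∈ XDes X (w.insertIdx q a) ↔
      (i < q ∧ i ∈ XDes X w) ∨ (i = q + 1 ∧ q < w.length) ∨ (q + 1 < i ∧ i - 1 ∈ XDes X w) := by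
  simp only [mem_XDes, List.length_insertIdx_of_le_length hq, List.getD_eq_getElem?_getD,
    List.getElem?_insertIdx]
  grind

theorem XDes_insertIdx_length {X : Set (ℕ × ℕ)} {a : ℕ} {w : List ℕ}
    (hX : ∀ b ∈ w, (a, b) ∈ X ∧ (b, a) ∉ X) :
    XDes X (w.insertIdx w.length a) = XDes X w := by
  ext i
  rw [mem_XDes_insertIdx hX le_rfl]
  constructor
  · rintro (⟨-, h⟩ | ⟨-, h⟩ | ⟨h, h'⟩)
    · exact h
    · exact absurd h (lt_irrefl _)
    · have := lt_length_of_mem_XDes h'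
      omega
  · intro h
    exact Or.inl ⟨lt_length_of_mem_XDes h, h⟩

-- Descent positions are 1-based and `insertIdx` positions 0-based: a letter inserted at
-- position `q` of `w` sits between the descent positions `q` and `q + 1` of the new word.
def insertDes (q : ℕ) (D : Finset ℕ) : Finset ℕ :=
  insert (q + 1) ({i ∈ D | i < q} ∪ {i ∈ D | q < i}.image (· + 1))

theorem mem_insertDes {q i : ℕ} {D : Finset ℕ} :
    i ∈ insertDes q D ↔ (i < q ∧ i ∈ D) ∨ i = q + 1 ∨ (q + 1 < i ∧ i - 1 ∈ D) := by
  simp only [insertDes, mem_insert, mem_union, mem_filter, mem_image]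
  grind

theorem XDes_insertIdx {X : Set (ℕ × ℕ)} {a : ℕ} {w : List ℕ}
    (hX : ∀ b ∈ w, (a, b) ∈ X ∧ (b, a) ∉ X) {q : ℕ} (hq : q < w.length) :
    XDes X (w.insertIdx q a) = insertDes q (XDes X w) := by
  ext i
  rw [mem_XDes_insertIdx hX hq.le, mem_insertDes]
  simp only [hq, and_true]

theorem mem_shiftDrop {I : Finset ℕ} {m i : ℕ} :
    i ∈ shiftDrop I m ↔ i ≠ 0 ∧ ((i ∈ I ∧ i < m) ∨ (m < i + 1 ∧ i + 1 ∈ I)) := by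
  simp only [shiftDrop, mem_erase, mem_union, mem_filter, mem_image]
  grind

theorem insertDes_eq_iff {q : ℕ} {D I : Finset ℕ} (h0 : 0 ∉ I) :
    insertDes q D = I ↔ q + 1 ∈ I ∧ q ∉ I ∧ D.erase q = shiftDrop I (q + 1) := by
  constructor
  · rintro rfl
    refine ⟨mem_insertDes.2 (Or.inr (Or.inl rfl)), by simp [mem_insertDes], ?_⟩
    ext i
    simp only [mem_insertDes] at h0
    simp only [mem_erase, mem_shiftDrop, mem_insertDes]
    grind
  · rintro ⟨h1, h2, h3⟩
    ext i
    have hi := congrArg (i ∈ ·) h3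
    have hi' := congrArg ((i - 1) ∈ ·) h3
    simp only [mem_erase, mem_shiftDrop, eq_iff_iff] at hi hi'
    rw [mem_insertDes]
    grind

theorem shiftFrom_eq_insert_shiftDrop {I : Finset ℕ} {m : ℕ} (hm : m ∈ I) (hm2 : 2 ≤ m) :
    shiftFrom I m = insert (m - 1) (shiftDrop I m) := by
  ext i
  simp only [shiftFrom, shiftDrop, mem_insert, mem_erase, mem_union, mem_filter, mem_image]
  grind

theorem dX_eq_card (X : Set (ℕ × ℕ)) (I S : Finset ℕ) :
    dX X I S = #{w ∈ S.lists | XDes X w = I} := by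
  rw [dX, ← Nat.card_eq_finsetCard]
  exact Nat.card_congr <| Equiv.subtypeEquivRight fun w => by
    rw [mem_filter, mem_lists, and_assoc]

theorem dX_insert_zero (X : Set (ℕ × ℕ)) (J S : Finset ℕ) : dX X (insert 0 J) S = 0 := by
  rw [dX_eq_card, card_eq_zero, filter_eq_empty_iff]
  exact fun w _ h => zero_notMem_XDes X w (h ▸ mem_insert_self 0 J)

section Insertion

variable {X : Set (ℕ × ℕ)} {a : ℕ} {S : Finset ℕ}

theorem card_filter_XDes_insertIdx_card (hX : ∀ b ∈ S, (a, b) ∈ X ∧ (b, a) ∉ X) (I : Finset ℕ) :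
    #{w ∈ S.lists | XDes X (w.insertIdx #S a) = I} = dX X I S := by
  rw [dX_eq_card]
  refine congrArg card (filter_congr fun w hw => ?_)
  rw [← length_of_mem_lists hw,
    XDes_insertIdx_length fun b hb => hX b ((mem_iff_of_mem_lists hw).1 hb)]

theorem card_filter_XDes_insertIdx (hX : ∀ b ∈ S, (a, b) ∈ X ∧ (b, a) ∉ X) {I : Finset ℕ}
    (h0 : 0 ∉ I) {q : ℕ} (hq : q < #S) :
    #{w ∈ S.lists | XDes X (w.insertIdx q a) = I} =
      if q + 1 ∈ I ∧ q ∉ I then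
        dX X (shiftDrop I (q + 1)) S + dX X (insert q (shiftDrop I (q + 1))) S
      else 0 := by
  have key : ∀ w ∈ S.lists, XDes X (w.insertIdx q a) = I ↔
      (q + 1 ∈ I ∧ q ∉ I) ∧ (XDes X w).erase q = shiftDrop I (q + 1) := fun w hw => by
    rw [XDes_insertIdx (fun b hb => hX b ((mem_iff_of_mem_lists hw).1 hb))
      (length_of_mem_lists hw ▸ hq),
      insertDes_eq_iff h0, and_assoc]
  split_ifs with hI
  · have hq : q ∉ shiftDrop I (q + 1) := by simp [mem_shiftDrop, hI.2]
    simp only [and_iff_right hI] at key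
    rw [filter_congr key, card_filter_erase_eq _ _ hq, dX_eq_card, dX_eq_card]
  · simp only [hI, false_and, iff_false] at key
    rw [card_eq_zero, filter_eq_empty_iff]
    exact key

theorem dX_insert (hX : ∀ b ∈ S, (a, b) ∈ X ∧ (b, a) ∉ X) (ha : a ∉ S) {I : Finset ℕ}
    (hI : I ⊆ Icc 1 #S) :
    dX X I (insert a S) =
      dX X I S
      + (∑ m ∈ (I.filter (fun i => i - 1 ∉ I)).erase 1, dX X (shiftFrom I m) S)
      + (∑ m ∈ I.filter (fun i => i - 1 ∉ I), dX X (shiftDrop I m) S) := by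
  set T := I.filter (fun i => i - 1 ∉ I)
  have h0 : 0 ∉ I := fun h => by simpa using hI h
  have hpos : ∀ q ∈ range #S, #{w ∈ S.lists | XDes X (w.insertIdx q a) = I} =
      if q + 1 ∈ T then
        dX X (shiftDrop I (q + 1)) S + dX X (insert (q + 1 - 1) (shiftDrop I (q + 1))) S
      else 0 := fun q hq => by
    rw [card_filter_XDes_insertIdx hX h0 (mem_range.1 hq)]
    simp only [T, mem_filter, Nat.add_sub_cancel]
  have hfrom : ∑ m ∈ T, dX X (insert (m - 1) (shiftDrop I m)) S =
      ∑ m ∈ T.erase 1, dX X (shiftFrom I m) S := by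
    have h1 : dX X (insert (1 - 1) (shiftDrop I 1)) S = 0 := dX_insert_zero X _ S
    rw [← sum_erase T h1]
    refine sum_congr rfl fun m hm => ?_
    obtain ⟨hm1, hmT⟩ := mem_erase.1 hm
    have hmI := (mem_filter.1 hmT).1
    have := mem_Icc.1 (hI hmI)
    rw [shiftFrom_eq_insert_shiftDrop hmI (by omega)]
  rw [dX_eq_card, card_filter_lists_insert ha, sum_range_succ, sum_congr rfl hpos,
    sum_range_ite_succ_mem ((filter_subset _ _).trans hI)
      (fun m => dX X (shiftDrop I m) S + dX X (insert (m - 1) (shiftDrop I m)) S),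
    sum_add_distrib, hfrom, card_filter_XDes_insertIdx_card hX]
  ring

end Insertion

theorem stmt4_general (n : ℕ) (X : Set (ℕ × ℕ))
    (hX : ∀ i ∈ Finset.Icc 1 n, (n + 1, i) ∈ X ∧ (i, n + 1) ∉ X)
    (I : Finset ℕ) (hI : I ⊆ Finset.Icc 1 n) :
    dXn X I (n + 1) =
      dXn X I n
      + (∑ m ∈ (I.filter (fun i => i - 1 ∉ I)).erase 1, dXn X (shiftFrom I m) n)
      + (∑ m ∈ I.filter (fun i => i - 1 ∉ I), dXn X (shiftDrop I m) n) := by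
  have hcard : #(Icc 1 n) = n := by simp
  have h := dX_insert hX (by simp) (hcard ▸ hI)
  rwa [insert_Icc_right_eq_Icc_add_one (by omega)] at h

/-- insertion recursion. Fix `n ≥ 1` and assume `(n+1,i) ∈ X` and
`(i,n+1) ∉ X` for every `i ∈ [n]`. For `I = {i₁ < ⋯ < i_ℓ} ⊆ [n]`, with
`I' = {i_k ∈ I : i_k − 1 ∉ I}` and `I'' = I' \ {1}`:
`d_X(I;n+1) = d_X(I;n) + Σ_{i_k ∈ I''} d_X(I_k;n) + Σ_{i_k ∈ I'} d_X(Î_k;n)`. -/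
theorem stmt4 (n : ℕ) (hn : 1 ≤ n) (X : Set (ℕ × ℕ))
    (hX : ∀ i ∈ Finset.Icc 1 n, (n + 1, i) ∈ X ∧ (i, n + 1) ∉ X)
    (I : Finset ℕ) (hI : I ⊆ Finset.Icc 1 n) :
    dXn X I (n + 1) =
      dXn X I n
      + (∑ m ∈ (I.filter (fun i => i - 1 ∉ I)).erase 1, dXn X (shiftFrom I m) n)
      + (∑ m ∈ I.filter (fun i => i - 1 ∉ I), dXn X (shiftDrop I m) n) :=
  stmt4_general n X hX I hI
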